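/- Assume (A1). Let f_0 ∈ H_1, u = (u_m)_{m≥0} a positive decreasing sequence, C > 0, r a nonnegative integer, and 0 < K ≤ 1. Set C* = C_{f_0}(K,u,C,r) ∩ V_m^⊥ for an integer m ≥ r. Then sup{ ‖f‖_H : f ∈ C*, f_0 + f ∈ H_1 and f_0 − f ∈ H_1 } ≤ C·u_m, and sup{ ‖f‖_H : f ∈ C*, f_0 + f ∈ H_1 and f_0 − f ∈ H_1 } ≥ min{ C·u_{m+1}, K / K_{∞,f_0}(V_{m+2} ⊖ V_m) }, where V_{m+2} ⊖ V_m = V_{m+2} ∩ V_m^⊥. -/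

import Mathlib

/-!
The upper bound is Pythagoras: an `f ⊥ V_m` is at distance at least `‖f‖` from `V_m`, and
`f ∈ C(u,C,r)` bounds that distance by `C u_m`. For the lower bound, `V_{m+2} ⊖ V_m` is
two-dimensional by (A1), so it contains a unit vector `g` with `∫ g dν = 0`. Then
`f = t g` with `t = min{C u_{m+1}, K / K_{∞,f₀}(V_{m+2} ⊖ V_m)}` lies in `V_{m+2}`, has
`‖f‖ ≤ C u_{m+1}` (hence `f ∈ C(u,C,r)`), and `|f| ≤ K f₀ ≤ f₀`, so `f₀ ± f` are densities.
-/

open MeasureTheory ENNReal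

noncomputable section

/-- Weighted essential sup norm `‖f‖_{∞,f₀} = ν-ess sup |f|/f₀`. -/
def wnorm {α : Type*} [MeasurableSpace α] {ν : Measure α} (f f₀ : Lp ℝ 2 ν) : ℝ≥0∞ :=
  essSup (fun θ => ENNReal.ofReal |f θ| / ENNReal.ofReal (f₀ θ)) ν

/-- `K_{∞,f₀}(V)`. -/
def Kinf {α : Type*} [MeasurableSpace α] {ν : Measure α} (f₀ : Lp ℝ 2 ν)
    (V : Set (Lp ℝ 2 ν)) : ℝ≥0∞ :=
  ⨆ (g : Lp ℝ 2 ν) (_ : g ∈ V ∧ ‖g‖ = 1), wnorm g f₀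

/-- `V_m = span(Π 1_k, 0 ≤ k < m)`. -/
def Vspan {α : Type*} [MeasurableSpace α] {ν : Measure α} (Pi1 : ℕ → Lp ℝ 2 ν) (m : ℕ) :
    Submodule ℝ (Lp ℝ 2 ν) :=
  Submodule.span ℝ (Pi1 '' Set.Iio m)

/-- The approximation class `C(u,C,r)`. -/
def classV {α : Type*} [MeasurableSpace α] {ν : Measure α} (Pi1 : ℕ → Lp ℝ 2 ν)
    (u : ℕ → ℝ) (C : ℝ) (r : ℕ) : Set (Lp ℝ 2 ν) :=
  {f | ∀ m, r ≤ m → Metric.infDist f (Vspan Pi1 m : Set (Lp ℝ 2 ν)) ≤ C * u m}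

/-- Probability densities belonging to `H`. -/
def H1 {α : Type*} [MeasurableSpace α] (ν : Measure α) : Set (Lp ℝ 2 ν) :=
  {f | 0 ≤ᵐ[ν] ⇑f ∧ ∫ θ, f θ ∂ν = 1}

open Module Submodule

theorem norm_le_infDist_of_mem_orthogonal {E : Type*} [NormedAddCommGroup E]
    [InnerProductSpace ℝ E] {V : Submodule ℝ E} {f : E} (hf : f ∈ Vᗮ) :
    ‖f‖ ≤ Metric.infDist f (V : Set E) := by
  refine (Metric.le_infDist ⟨0, V.zero_mem⟩).2 fun g hg => ?_
  rw [dist_eq_norm, mul_self_le_mul_self_iff (norm_nonneg _) (norm_nonneg _),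
    norm_sub_sq_eq_norm_sq_add_norm_sq_real (inner_left_of_mem_orthogonal hg hf)]
  exact le_add_of_nonneg_right (mul_self_nonneg _)

theorem min_div_mul_le_of_le {a b c k : ℝ≥0∞} (hab : a ≤ b) : min c (k / b) * a ≤ k :=
  calc min c (k / b) * a ≤ k / a * a := by
        gcongr; exact (min_le_right _ _).trans (ENNReal.div_le_div_left hab k)
    _ ≤ k := by rw [mul_comm]; exact ENNReal.mul_div_le

section Lp

variable {α : Type*} [MeasurableSpace α] {ν : Measure α}

def integrableSubmodule (p : ℝ≥0∞) (ν : Measure α) : Submodule ℝ (Lp ℝ p ν) where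
  carrier := {f | Integrable f ν}
  add_mem' hf hg := (hf.add hg).congr (Lp.coeFn_add _ _).symm
  zero_mem' := (integrable_zero _ _ _).congr (Lp.coeFn_zero ℝ p ν).symm
  smul_mem' c _ hf := (hf.smul c).congr (Lp.coeFn_smul c _).symm

theorem integral_Lp_smul {p : ℝ≥0∞} (c : ℝ) (f : Lp ℝ p ν) :
    ∫ θ, (c • f) θ ∂ν = c * ∫ θ, f θ ∂ν := by
  rw [integral_congr_ae (Lp.coeFn_smul c f), ← integral_const_mul]
  rfl

def integralₗ (p : ℝ≥0∞) (ν : Measure α) : integrableSubmodule p ν →ₗ[ℝ] ℝ where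
  toFun f := ∫ θ, (f : Lp ℝ p ν) θ ∂ν
  map_add' f g := by
    change ∫ θ, ((f : Lp ℝ p ν) + g) θ ∂ν = _
    rw [integral_congr_ae (Lp.coeFn_add _ _)]
    exact integral_add f.2 g.2
  map_smul' c f := integral_Lp_smul c (f : Lp ℝ p ν)

theorem exists_norm_eq_one_integral_eq_zero {p : ℝ≥0∞} [Fact (1 ≤ p)]
    {W : Submodule ℝ (Lp ℝ p ν)} [FiniteDimensional ℝ W] (hW : W ≤ integrableSubmodule p ν)
    (hdim : 1 < finrank ℝ W) :
    ∃ g ∈ W, ‖g‖ = 1 ∧ ∫ θ, g θ ∂ν = 0 := by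
  have hker : LinearMap.ker ((integralₗ p ν).comp (inclusion hW)) ≠ ⊥ :=
    LinearMap.ker_ne_bot_of_finrank_lt (by rwa [finrank_self])
  obtain ⟨w, hw, hw0⟩ := (Submodule.ne_bot_iff _).1 hker
  have hw0' : (w : Lp ℝ p ν) ≠ 0 := by exact_mod_cast hw0
  refine ⟨‖(w : Lp ℝ p ν)‖⁻¹ • (w : Lp ℝ p ν), W.smul_mem _ w.2, ?_, ?_⟩
  · rw [norm_smul, norm_inv, norm_norm, inv_mul_cancel₀ (norm_ne_zero_iff.2 hw0')]
  · rw [integral_Lp_smul, show ∫ θ, (w : Lp ℝ p ν) θ ∂ν = 0 from hw, mul_zero]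

theorem wnorm_smul {f f₀ : Lp ℝ 2 ν} {t : ℝ} (ht : 0 ≤ t) :
    wnorm (t • f) f₀ = ENNReal.ofReal t * wnorm f f₀ := by
  rw [wnorm, wnorm, ← ENNReal.essSup_const_mul]
  refine essSup_congr_ae ?_
  filter_upwards [Lp.coeFn_smul t f] with θ hθ
  simp only [hθ, Pi.smul_apply, smul_eq_mul, abs_mul, abs_of_nonneg ht,
    ENNReal.ofReal_mul ht, mul_div_assoc]

theorem ae_abs_le_of_wnorm_le_one {f f₀ : Lp ℝ 2 ν} (hf₀ : 0 ≤ᵐ[ν] ⇑f₀)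
    (hf : wnorm f f₀ ≤ 1) : ∀ᵐ θ ∂ν, |f θ| ≤ f₀ θ := by
  filter_upwards [ENNReal.ae_le_essSup (fun θ => ENNReal.ofReal |f θ| / ENNReal.ofReal (f₀ θ)),
    hf₀] with θ hθ hθ₀
  have hdiv := hθ.trans hf
  rwa [ENNReal.div_le_iff_le_mul (Or.inr ENNReal.one_ne_top) (Or.inl ENNReal.ofReal_ne_top),
    one_mul, ENNReal.ofReal_le_ofReal_iff hθ₀] at hdiv

theorem integrable_of_mem_H1 {f₀ : Lp ℝ 2 ν} (hf₀ : f₀ ∈ H1 ν) : Integrable f₀ ν := by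
  by_contra h
  simpa [integral_undef h] using hf₀.2

theorem add_mem_H1_of_abs_le {f₀ f : Lp ℝ 2 ν} (hf₀ : f₀ ∈ H1 ν)
    (hf : ∀ᵐ θ ∂ν, |f θ| ≤ f₀ θ) (hf0 : ∫ θ, f θ ∂ν = 0) :
    f₀ + f ∈ H1 ν ∧ f₀ - f ∈ H1 ν := by
  have hf₀i := integrable_of_mem_H1 hf₀
  have hfi : Integrable f ν := hf₀i.mono' (Lp.aestronglyMeasurable f) (by simpa using hf)
  refine ⟨⟨?_, ?_⟩, ⟨?_, ?_⟩⟩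
  · filter_upwards [Lp.coeFn_add f₀ f, hf] with θ h h'
    rw [Pi.zero_apply, h, Pi.add_apply]
    linarith [neg_abs_le (f θ)]
  · rw [integral_congr_ae (Lp.coeFn_add _ _), Pi.add_def, integral_add hf₀i hfi, hf₀.2, hf0,
      add_zero]
  · filter_upwards [Lp.coeFn_sub f₀ f, hf] with θ h h'
    rw [Pi.zero_apply, h, Pi.sub_apply]
    linarith [le_abs_self (f θ)]
  · rw [integral_congr_ae (Lp.coeFn_sub _ _), Pi.sub_def, integral_sub hf₀i hfi, hf₀.2, hf0,
      sub_zero]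

end Lp

section Vspan

variable {α : Type*} [MeasurableSpace α] {ν : Measure α} (Pi1 : ℕ → Lp ℝ 2 ν)

instance (n : ℕ) : FiniteDimensional ℝ (Vspan Pi1 n) :=
  FiniteDimensional.span_of_finite ℝ ((Set.finite_Iio n).image Pi1)

theorem Vspan_mono : Monotone (Vspan Pi1) := fun _ _ h =>
  span_mono (Set.image_mono (Set.Iio_subset_Iio h))

theorem finrank_Vspan (hli : LinearIndependent ℝ Pi1) (n : ℕ) :
    finrank ℝ (Vspan Pi1 n) = n := by
  have := finrank_span_eq_card (hli.comp (Fin.val : Fin n → ℕ) Fin.val_injective)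
  rwa [Set.range_comp, Fin.range_val, Fintype.card_fin] at this

theorem finrank_Vspan_add_two_inf_orthogonal (hli : LinearIndependent ℝ Pi1) (m : ℕ) :
    finrank ℝ ↥(Vspan Pi1 (m + 2) ⊓ (Vspan Pi1 m)ᗮ) = 2 := by
  rw [inf_comm]
  exact finrank_add_inf_finrank_orthogonal' (Vspan_mono Pi1 (by omega))
    (by rw [finrank_Vspan Pi1 hli, finrank_Vspan Pi1 hli])

theorem Vspan_le_integrableSubmodule (hint : ∀ k, Integrable (Pi1 k) ν) (n : ℕ) :
    Vspan Pi1 n ≤ integrableSubmodule 2 ν :=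
  span_le.2 <| by rintro _ ⟨k, -, rfl⟩; exact hint k

theorem mem_classV_of_mem_Vspan {u : ℕ → ℝ} {C : ℝ} (hC : 0 ≤ C) (hu : ∀ n, 0 ≤ u n)
    (hu_anti : Antitone u) (r : ℕ) {n : ℕ} {f : Lp ℝ 2 ν} (hf : f ∈ Vspan Pi1 (n + 1))
    (hnorm : ‖f‖ ≤ C * u n) : f ∈ classV Pi1 u C r := by
  intro k _
  rcases le_or_gt (n + 1) k with hk | hk
  · rw [Metric.infDist_zero_of_mem (Vspan_mono Pi1 hk hf)]
    exact mul_nonneg hC (hu k)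
  · calc Metric.infDist f (Vspan Pi1 k) ≤ dist f 0 :=
          Metric.infDist_le_dist_of_mem (Vspan Pi1 k).zero_mem
      _ = ‖f‖ := dist_zero_right f
      _ ≤ C * u n := hnorm
      _ ≤ C * u k := mul_le_mul_of_nonneg_left (hu_anti (Nat.lt_succ_iff.1 hk)) hC

end Vspan

theorem statement5_general
    {d : ℕ} {Θ : Set (Fin d → ℝ)}
    (ν : Measure Θ)
    (π : Θ → ℕ → ℝ)
    -- (A1)
    (Pi1 : ℕ → Lp ℝ 2 ν) (hPi1 : ∀ k, ⇑(Pi1 k) =ᵐ[ν] fun θ => π θ k)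
    (hPi1_int : ∀ k, Integrable (fun θ => π θ k) ν)
    (hPi1_li : LinearIndependent ℝ Pi1)
    -- data
    (f₀ : Lp ℝ 2 ν) (hf₀ : f₀ ∈ H1 ν)
    (u : ℕ → ℝ) (hu_pos : ∀ m', 0 < u m') (hu_dec : Antitone u)
    (C : ℝ) (hC : 0 < C) (r : ℕ) (K : ℝ) (hK_le : K ≤ 1)
    (m : ℕ) (hm : r ≤ m) :
    sSup {x : ℝ | ∃ f : Lp ℝ 2 ν,
        f ∈ classV Pi1 u C r ∧ wnorm f f₀ ≤ ENNReal.ofReal K ∧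
        f ∈ ((Vspan Pi1 m)ᗮ : Submodule ℝ (Lp ℝ 2 ν)) ∧
        f₀ + f ∈ H1 ν ∧ f₀ - f ∈ H1 ν ∧ x = ‖f‖}
      ≤ C * u m ∧
    (min (ENNReal.ofReal (C * u (m + 1)))
        (ENNReal.ofReal K /
          Kinf f₀ ((Vspan Pi1 (m + 2) ⊓ (Vspan Pi1 m)ᗮ : Submodule ℝ (Lp ℝ 2 ν)) :
            Set (Lp ℝ 2 ν)))).toReal
      ≤ sSup {x : ℝ | ∃ f : Lp ℝ 2 ν,
          f ∈ classV Pi1 u C r ∧ wnorm f f₀ ≤ ENNReal.ofReal K ∧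
          f ∈ ((Vspan Pi1 m)ᗮ : Submodule ℝ (Lp ℝ 2 ν)) ∧
          f₀ + f ∈ H1 ν ∧ f₀ - f ∈ H1 ν ∧ x = ‖f‖} := by
  refine ⟨Real.sSup_le ?bound (mul_nonneg hC.le (hu_pos m).le), le_csSup ⟨_, ?bound⟩ ?_⟩
  case bound =>
    rintro _ ⟨f, hfC, -, hf, -, -, rfl⟩
    exact (norm_le_infDist_of_mem_orthogonal hf).trans (hfC m hm)
  set W := Vspan Pi1 (m + 2) ⊓ (Vspan Pi1 m)ᗮ
  obtain ⟨g, hgW, hg1, hg0⟩ := exists_norm_eq_one_integral_eq_zero (W := W)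
    (inf_le_left.trans <| Vspan_le_integrableSubmodule Pi1
      (fun k => (hPi1_int k).congr (hPi1 k).symm) _)
    (by rw [finrank_Vspan_add_two_inf_orthogonal Pi1 hPi1_li]; norm_num)
  set M := min (ENNReal.ofReal (C * u (m + 1))) (ENNReal.ofReal K / Kinf f₀ W)
  have hwnorm : wnorm (M.toReal • g) f₀ ≤ ENNReal.ofReal K := by
    rw [wnorm_smul ENNReal.toReal_nonneg,
      ENNReal.ofReal_toReal (ne_top_of_le_ne_top ENNReal.ofReal_ne_top (min_le_left _ _))]
    exact min_div_mul_le_of_le (le_iSup₂_of_le g ⟨hgW, hg1⟩ le_rfl)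
  have hnorm : ‖M.toReal • g‖ = M.toReal := by
    rw [norm_smul, hg1, mul_one, Real.norm_of_nonneg ENNReal.toReal_nonneg]
  have hdens := add_mem_H1_of_abs_le hf₀
    (ae_abs_le_of_wnorm_le_one hf₀.1 (hwnorm.trans (ENNReal.ofReal_le_one.2 hK_le)))
    (by rw [integral_Lp_smul, hg0, mul_zero])
  refine ⟨M.toReal • g, mem_classV_of_mem_Vspan Pi1 hC.le (fun n => (hu_pos n).le) hu_dec r
    (W.smul_mem _ hgW).1 ?_, hwnorm, (W.smul_mem _ hgW).2, hdens.1, hdens.2, hnorm.symm⟩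
  rw [hnorm]
  exact ENNReal.toReal_le_of_le_ofReal (mul_nonneg hC.le (hu_pos _).le) (min_le_left _ _)

theorem statement5
    {d : ℕ} {Θ : Set (Fin d → ℝ)} (hΘ : MeasurableSet Θ)
    (ν : Measure Θ) [SigmaFinite ν]
    (π : Θ → ℕ → ℝ)
    (hπ_meas : ∀ k, Measurable fun θ => π θ k)
    (hπ_nonneg : ∀ θ k, 0 ≤ π θ k)
    (hπ_sum : ∀ θ, HasSum (fun k => π θ k) 1)
    -- (A1)
    (Pi1 : ℕ → Lp ℝ 2 ν) (hPi1 : ∀ k, ⇑(Pi1 k) =ᵐ[ν] fun θ => π θ k)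
    (hPi1_int : ∀ k, Integrable (fun θ => π θ k) ν)
    (hPi1_li : LinearIndependent ℝ Pi1)
    -- data
    (f₀ : Lp ℝ 2 ν) (hf₀ : f₀ ∈ H1 ν)
    (u : ℕ → ℝ) (hu_pos : ∀ m', 0 < u m') (hu_dec : Antitone u)
    (C : ℝ) (hC : 0 < C) (r : ℕ) (K : ℝ) (hK_pos : 0 < K) (hK_le : K ≤ 1)
    (m : ℕ) (hm : r ≤ m) :
    sSup {x : ℝ | ∃ f : Lp ℝ 2 ν,
        f ∈ classV Pi1 u C r ∧ wnorm f f₀ ≤ ENNReal.ofReal K ∧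
        f ∈ ((Vspan Pi1 m)ᗮ : Submodule ℝ (Lp ℝ 2 ν)) ∧
        f₀ + f ∈ H1 ν ∧ f₀ - f ∈ H1 ν ∧ x = ‖f‖}
      ≤ C * u m ∧
    (min (ENNReal.ofReal (C * u (m + 1)))
        (ENNReal.ofReal K /
          Kinf f₀ ((Vspan Pi1 (m + 2) ⊓ (Vspan Pi1 m)ᗮ : Submodule ℝ (Lp ℝ 2 ν)) :
            Set (Lp ℝ 2 ν)))).toReal
      ≤ sSup {x : ℝ | ∃ f : Lp ℝ 2 ν,
          f ∈ classV Pi1 u C r ∧ wnorm f f₀ ≤ ENNReal.ofReal K ∧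
          f ∈ ((Vspan Pi1 m)ᗮ : Submodule ℝ (Lp ℝ 2 ν)) ∧
          f₀ + f ∈ H1 ν ∧ f₀ - f ∈ H1 ν ∧ x = ‖f‖} :=
  statement5_general ν π Pi1 hPi1 hPi1_int hPi1_li f₀ hf₀ u hu_pos hu_dec C hC r K hK_le m hm

end
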